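/- Let n ≥ 1. In (ℤ/2ℤ)[X₀, …, X_{n−1}], let I be the ideal generated by Xᵢ² − X_{i+1} for 0 ≤ i ≤ n−2 together with X_{n−1}². Then for every polynomial f ∈ (ℤ/2ℤ)[X₀, …, X_{n−1}] there exists a unique multilinear polynomial g (every exponent in every monomial of its support is at most 1) such that f − g ∈ I. -/
import Mathlib


open MvPolynomial

/-- The generators of the ideal `I` over `ℤ/2ℤ`: `Xᵢ² − X_{i+1}` for `i ≤ n-2`,
and `X_{n-1}²`. -/
noncomputable def gens (n : ℕ) : Fin n → MvPolynomial (Fin n) (ZMod 2) := fun i =>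
  if h : (i : ℕ) + 1 < n then X i ^ 2 - X ⟨(i : ℕ) + 1, h⟩ else X i ^ 2

namespace Stmt13Aux


lemma nat_bound (f : ℕ → ℕ) (hf : ∀ j, f j ≤ 1) :
    ∀ N, (∑ j ∈ Finset.range N, f j * 2 ^ j) < 2 ^ N := by
  intro N
  induction N with
  | zero => simp
  | succ N ih =>
    rw [Finset.sum_range_succ, pow_succ]
    have h1 : f N * 2 ^ N ≤ 1 * 2 ^ N := Nat.mul_le_mul_right _ (hf N)
    omega

lemma nat_inj : ∀ (N : ℕ) (f g : ℕ → ℕ), (∀ j, f j ≤ 1) → (∀ j, g j ≤ 1) →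
    (∑ j ∈ Finset.range N, f j * 2 ^ j) = (∑ j ∈ Finset.range N, g j * 2 ^ j) →
    ∀ j < N, f j = g j := by
  intro N
  induction N with
  | zero => intro f g _ _ _ j hj; omega
  | succ N ih =>
    intro f g hf hg hsum j hj
    rw [Finset.sum_range_succ, Finset.sum_range_succ] at hsum
    have hF := nat_bound f hf N
    have hG := nat_bound g hg N
    have h1 := hf N
    have h2 := hg N
    have hfN : f N = g N := by
      rcases Nat.le_one_iff_eq_zero_or_eq_one.mp h1 with h | h <;>
        rcases Nat.le_one_iff_eq_zero_or_eq_one.mp h2 with h' | h' <;>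
          rw [h, h'] at hsum <;> omega
    rcases Nat.lt_succ_iff_lt_or_eq.mp hj with h | h
    · exact ih f g hf hg (by rw [hfN] at hsum; omega) j h
    · rw [h]; exact hfN



variable {n : ℕ}

/-- weight of a monomial -/
def wt (m : Fin n →₀ ℕ) : ℕ := ∑ i : Fin n, m i * 2 ^ (i : ℕ)

def ext' (m : Fin n →₀ ℕ) : ℕ → ℕ := fun j => if h : j < n then m ⟨j, h⟩ else 0

lemma wt_eq_range (m : Fin n →₀ ℕ) :
    wt m = ∑ j ∈ Finset.range n, ext' m j * 2 ^ j := by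
  rw [wt, ← Fin.sum_univ_eq_sum_range (fun j => ext' m j * 2 ^ j) n]
  refine Finset.sum_congr rfl fun i _ => ?_
  simp [ext']

lemma ext'_le {m : Fin n →₀ ℕ} (hm : ∀ i, m i ≤ 1) : ∀ j, ext' m j ≤ 1 := by
  intro j; unfold ext'; split <;> simp [hm]

lemma wt_lt {m : Fin n →₀ ℕ} (hm : ∀ i, m i ≤ 1) : wt m < 2 ^ n := by
  rw [wt_eq_range]; exact nat_bound _ (ext'_le hm) n

lemma wt_inj {m₁ m₂ : Fin n →₀ ℕ} (h₁ : ∀ i, m₁ i ≤ 1) (h₂ : ∀ i, m₂ i ≤ 1)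
    (h : wt m₁ = wt m₂) : m₁ = m₂ := by
  rw [wt_eq_range, wt_eq_range] at h
  ext i
  have := nat_inj n _ _ (ext'_le h₁) (ext'_le h₂) h i i.isLt
  simpa [ext'] using this

noncomputable def ψ : MvPolynomial (Fin n) (ZMod 2) →ₐ[ZMod 2] Polynomial (ZMod 2) :=
  aeval fun i : Fin n => (Polynomial.X : Polynomial (ZMod 2)) ^ 2 ^ (i : ℕ)

lemma psi_monomial (m : Fin n →₀ ℕ) (c : ZMod 2) :
    ψ (monomial m c) = Polynomial.C c * Polynomial.X ^ wt m := by
  rw [ψ, aeval_monomial]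
  congr 1
  rw [Finsupp.prod_fintype _ _ (fun i => pow_zero _)]
  have : ∀ i : Fin n, ((Polynomial.X : Polynomial (ZMod 2)) ^ 2 ^ (i : ℕ)) ^ m i
      = Polynomial.X ^ (m i * 2 ^ (i : ℕ)) := by
    intro i; rw [← pow_mul, mul_comm]
  simp_rw [this]
  rw [Finset.prod_pow_eq_pow_sum]
  rfl

lemma psi_gens (i : Fin n) : ψ (gens n i) ∈ Ideal.span {(Polynomial.X : Polynomial (ZMod 2)) ^ 2 ^ n} := by
  unfold gens
  split
  · rename_i h
    rw [map_sub]
    show (ψ (X i ^ 2)) - ψ (X _) ∈ _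
    rw [map_pow, ψ, aeval_X, aeval_X]
    rw [← pow_mul]
    have : 2 ^ (i : ℕ) * 2 = 2 ^ ((i : ℕ) + 1) := by rw [pow_succ]
    rw [this]
    simp
  · rename_i h
    rw [map_pow, ψ, aeval_X, ← pow_mul]
    have hi : (i : ℕ) = n - 1 := by have := i.isLt; omega
    have h2 : 2 ^ (i : ℕ) * 2 = 2 ^ n := by
      rw [hi, ← pow_succ]
      congr 1
      have := i.isLt; omega
    rw [h2]
    exact Ideal.subset_span rfl

lemma psi_ideal {p : MvPolynomial (Fin n) (ZMod 2)}
    (hp : p ∈ Ideal.span (Set.range (gens n))) :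
    ψ p ∈ Ideal.span {(Polynomial.X : Polynomial (ZMod 2)) ^ 2 ^ n} := by
  have h1 : ψ.toRingHom p ∈ Ideal.map (ψ.toRingHom : MvPolynomial (Fin n) (ZMod 2) →+* Polynomial (ZMod 2))
      (Ideal.span (Set.range (gens n))) := Ideal.mem_map_of_mem _ hp
  rw [Ideal.map_span] at h1
  refine Ideal.span_le.mpr ?_ h1
  rintro x ⟨y, ⟨i, rfl⟩, rfl⟩
  exact psi_gens i

lemma mlin_eq_zero {g : MvPolynomial (Fin n) (ZMod 2)}
    (hg : ∀ m ∈ g.support, ∀ i : Fin n, m i ≤ 1)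
    (hgI : g ∈ Ideal.span (Set.range (gens n))) : g = 0 := by
  have hdvd : (Polynomial.X : Polynomial (ZMod 2)) ^ 2 ^ n ∣ ψ g :=
    Ideal.mem_span_singleton.mp (psi_ideal hgI)
  obtain ⟨q, hq⟩ := hdvd
  ext m
  rw [coeff_zero]
  by_cases hm : m ∈ g.support
  · have hcoeff : (ψ g).coeff (wt m) = coeff m g := by
      conv_lhs => rw [as_sum g]
      rw [map_sum, Polynomial.finset_sum_coeff]
      have hone : ∀ v ∈ g.support, v ≠ m →
          (ψ (monomial v (coeff v g))).coeff (wt m) = 0 := by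
        intro v hv hvm
        rw [psi_monomial, Polynomial.coeff_C_mul, Polynomial.coeff_X_pow,
          if_neg (fun hEq => hvm (wt_inj (hg v hv) (hg m hm) hEq.symm)), mul_zero]
      rw [Finset.sum_eq_single_of_mem m hm hone, psi_monomial,
        Polynomial.coeff_C_mul, Polynomial.coeff_X_pow, if_pos rfl, mul_one]
    rw [← hcoeff, hq, mul_comm, Polynomial.coeff_mul_X_pow',
      if_neg (not_le.mpr (wt_lt (hg m hm)))]
  · exact notMem_support_iff.mp hm




lemma single_sum (i : Fin n) (k : ℕ) : ∑ j : Fin n, (Finsupp.single i k) j = k := by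
  rw [Finset.sum_eq_single i]
  · simp
  · intro j _ hj; rw [Finsupp.single_apply, if_neg (fun h => hj h.symm)]
  · simp

lemma exists_mono : ∀ d : ℕ, ∀ m : Fin n →₀ ℕ, (∑ i : Fin n, m i) ≤ d →
    ∃ g : MvPolynomial (Fin n) (ZMod 2),
      (∀ m' ∈ g.support, ∀ i : Fin n, m' i ≤ 1) ∧
      monomial m (1 : ZMod 2) - g ∈ Ideal.span (Set.range (gens n)) := by
  intro d
  induction d with
  | zero =>
    intro m hm
    refine ⟨monomial m 1, ?_, by simp⟩
    intro m' hm' i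
    rw [support_monomial, if_neg one_ne_zero] at hm'
    rw [Finset.mem_singleton] at hm'
    rw [hm']
    have : m i ≤ ∑ j : Fin n, m j := Finset.single_le_sum (fun _ _ => Nat.zero_le _) (Finset.mem_univ i)
    omega
  | succ d ih =>
    intro m hm
    by_cases hml : ∀ i : Fin n, m i ≤ 1
    · refine ⟨monomial m 1, ?_, by simp⟩
      intro m' hm' i
      rw [support_monomial, if_neg one_ne_zero, Finset.mem_singleton] at hm'
      rw [hm']; exact hml i
    · push_neg at hml
      obtain ⟨i, hi⟩ := hml
      have hi2 : 2 ≤ m i := hi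
      set m' := m - Finsupp.single i 2 with hm'def
      have hle : Finsupp.single i 2 ≤ m := Finsupp.single_le_iff.mpr hi2
      have hmeq : m' + Finsupp.single i 2 = m := tsub_add_cancel_of_le hle
      have hkey : monomial m (1 : ZMod 2) = monomial m' 1 * X i ^ 2 := by
        rw [X_pow_eq_monomial, monomial_mul, mul_one, hmeq]
      have hsum' : (∑ j : Fin n, m' j) + 2 ≤ d + 1 := by
        have := congrArg (fun f : Fin n →₀ ℕ => ∑ j : Fin n, f j) hmeq
        simp only [Finsupp.add_apply, Finset.sum_add_distrib, single_sum] at this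
        omega
      by_cases hlt : (i : ℕ) + 1 < n
      · set i' : Fin n := ⟨(i : ℕ) + 1, hlt⟩ with hi'def
        have hgen : (X i : MvPolynomial (Fin n) (ZMod 2)) ^ 2 = gens n i + X i' := by
          rw [gens, dif_pos hlt]; ring
        obtain ⟨g, hgml, hgI⟩ := ih (m' + Finsupp.single i' 1) (by
          simp only [Finsupp.add_apply, Finset.sum_add_distrib, single_sum]
          omega)
        refine ⟨g, hgml, ?_⟩
        have hrw : monomial m (1 : ZMod 2) - g
            = monomial m' 1 * gens n i + (monomial (m' + Finsupp.single i' 1) 1 - g) := by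
          rw [hkey, hgen]
          have : monomial m' (1 : ZMod 2) * X i' = monomial (m' + Finsupp.single i' 1) 1 := by
            rw [X, monomial_mul, mul_one]
          rw [← this]; ring
        rw [hrw]
        exact Ideal.add_mem _
          (Ideal.mul_mem_left _ _ (Ideal.subset_span ⟨i, rfl⟩)) hgI
      · refine ⟨0, by simp, ?_⟩
        rw [sub_zero, hkey]
        have hgen : gens n i = (X i : MvPolynomial (Fin n) (ZMod 2)) ^ 2 := by
          rw [gens, dif_neg hlt]
        rw [← hgen]
        exact Ideal.mul_mem_left _ _ (Ideal.subset_span ⟨i, rfl⟩)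




noncomputable def S (n : ℕ) : Submodule (ZMod 2) (MvPolynomial (Fin n) (ZMod 2)) where
  carrier := {f | ∃ g : MvPolynomial (Fin n) (ZMod 2),
      (∀ m ∈ g.support, ∀ i : Fin n, m i ≤ 1) ∧
      f - g ∈ Ideal.span (Set.range (gens n))}
  zero_mem' := ⟨0, by simp, by simp⟩
  add_mem' := by
    rintro a b ⟨g₁, hg₁, hI₁⟩ ⟨g₂, hg₂, hI₂⟩
    refine ⟨g₁ + g₂, ?_, ?_⟩
    · intro m hm i
      rcases Finset.mem_union.mp (support_add hm) with h | h
      · exact hg₁ m h i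
      · exact hg₂ m h i
    · have : a + b - (g₁ + g₂) = (a - g₁) + (b - g₂) := by ring
      rw [this]
      exact Ideal.add_mem _ hI₁ hI₂
  smul_mem' := by
    rintro c f ⟨g, hg, hI⟩
    refine ⟨c • g, ?_, ?_⟩
    · intro m hm i
      exact hg m (support_smul hm) i
    · have : c • f - c • g = C c * (f - g) := by
        rw [smul_eq_C_mul, smul_eq_C_mul]; ring
      rw [this]
      exact Ideal.mul_mem_left _ _ hI

lemma exists_all (f : MvPolynomial (Fin n) (ZMod 2)) : f ∈ S n := by
  rw [as_sum f]
  refine Submodule.sum_mem _ fun v _ => ?_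
  have : monomial v (coeff v f) = (coeff v f) • monomial v (1 : ZMod 2) := by
    rw [smul_monomial, smul_eq_mul, mul_one]
  rw [this]
  exact Submodule.smul_mem _ _ (exists_mono (∑ i : Fin n, v i) v le_rfl)

end Stmt13Aux

theorem stmt13 (n : ℕ) (hn : 1 ≤ n) (f : MvPolynomial (Fin n) (ZMod 2)) :
    ∃! g : MvPolynomial (Fin n) (ZMod 2),
      (∀ m ∈ g.support, ∀ i : Fin n, m i ≤ 1) ∧
      f - g ∈ Ideal.span (Set.range (gens n)) := by
  obtain ⟨g, hgml, hgI⟩ := Stmt13Aux.exists_all f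
  refine ⟨g, ⟨hgml, hgI⟩, ?_⟩
  rintro y ⟨hyml, hyI⟩
  have hsub : y - g ∈ Ideal.span (Set.range (gens n)) := by
    have : y - g = (f - g) - (f - y) := by ring
    rw [this]
    exact Ideal.sub_mem _ hgI hyI
  have hml : ∀ m ∈ (y - g).support, ∀ i : Fin n, m i ≤ 1 := by
    intro m hm i
    rw [sub_eq_add_neg] at hm
    rcases Finset.mem_union.mp (support_add hm) with h | h
    · exact hyml m h i
    · rw [support_neg] at h
      exact hgml m h i
  have := Stmt13Aux.mlin_eq_zero hml hsub
  exact sub_eq_zero.mp this
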